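/- arXiv:1904.07790 — 3 statements merged into one kernel-verified Lean document; each statement's English description precedes it below -/
import Mathlib

section
/- (Balanced Erdős–Rado for pairs) For every infinite cardinal κ and every nonzero ordinal γ with γ < cf(κ), the partition relation (2^{<κ})⁺ → (κ + 1)²_γ holds: for every coloring χ of the 2-element subsets of (2^{<κ})⁺ in γ colors there is a subset H of order type κ + 1 and a color i < γ such that all pairs from H receive color i. -/
open Ordinal Set Cardinal

instance otypeWO (H : Set Ordinal) :
    IsWellOrder (Subtype H) (Subrel ((· < ·) : Ordinal → Ordinal → Prop) H) :=
  Subrel.instIsWellOrderSubtype _ _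

/-- The order type of a set of ordinals. -/
noncomputable def otype (H : Set Ordinal) : Ordinal :=
  Ordinal.type (Subrel ((· < ·) : Ordinal → Ordinal → Prop) H)
    (wo := Subrel.instIsWellOrderSubtype _ _)

lemma otype_Iio (o : Ordinal.{0}) : otype (Set.Iio o) = Ordinal.lift.{1} o :=
  type_lt_Iio o

lemma otype_mono {S T : Set Ordinal.{0}} (h : S ⊆ T) : otype S ≤ otype T :=
  RelEmbedding.ordinal_type_le ⟨⟨Set.inclusion h, Set.inclusion_injective h⟩, Iff.rfl⟩

lemma otype_card (S : Set Ordinal.{0}) : (otype S).card = Cardinal.mk S :=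
  Ordinal.card_type _

lemma otype_image {S : Set Ordinal.{0}} {f : Ordinal.{0} → Ordinal.{0}}
    (hf : ∀ a ∈ S, ∀ b ∈ S, a < b → f a < f b) : otype (f '' S) = otype S := by
  have hinj : Set.InjOn f S := by
    intro a ha b hb hab
    rcases lt_trichotomy a b with h | h | h
    · exact absurd hab (hf a ha b hb h).ne
    · exact h
    · exact absurd hab.symm (hf b hb a ha h).ne
  have key : otype S = otype (f '' S) := by
    refine Ordinal.type_eq.mpr ⟨RelIso.mk (Equiv.Set.imageOfInjOn f S hinj) ?_⟩
    rintro ⟨a, ha⟩ ⟨b, hb⟩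
    simp only [Equiv.Set.imageOfInjOn, Equiv.coe_fn_mk, Subrel, Order.Preimage]
    constructor
    · intro h
      rcases lt_trichotomy a b with h' | h' | h'
      · exact h'
      · exact absurd (h' ▸ h) (lt_irrefl _)
      · exact absurd (hf b hb a ha h') (not_lt.mpr h.le)
    · exact hf a ha b hb
  exact key.symm

lemma otype_singleton (m : Ordinal.{0}) : otype ({m} : Set Ordinal) = 1 :=
  @Ordinal.type_eq_one_of_unique _ _ _ ⟨⟨m, rfl⟩⟩
    ⟨fun a b => Subtype.ext ((Set.eq_of_mem_singleton a.2).trans (Set.eq_of_mem_singleton b.2).symm)⟩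

lemma otype_insert_top {S : Set Ordinal.{0}} {m : Ordinal.{0}} (h : ∀ s ∈ S, s < m) :
    otype (insert m S) = otype S + 1 := by
  rw [← otype_singleton m]
  unfold otype
  rw [← Ordinal.type_sum_lex]
  refine (Ordinal.type_eq.mpr ⟨?_⟩).symm
  refine RelIso.ofSurjective
    ⟨⟨Sum.elim (fun a => ⟨a.1, Or.inr a.2⟩) (fun b => ⟨b.1, Or.inl b.2⟩), ?_⟩, ?_⟩ ?_
  · rintro (⟨a, ha⟩ | ⟨a, ha⟩) (⟨b, hb⟩ | ⟨b, hb⟩) hab <;>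
      simp only [Sum.elim_inl, Sum.elim_inr, Subtype.mk.injEq] at hab
    · exact congrArg Sum.inl (Subtype.ext (Subtype.mk.inj hab))
    · exact absurd (h a ha) (by rw [(show a = b from Subtype.mk.inj hab), Set.eq_of_mem_singleton hb]; exact lt_irrefl m)
    · exact absurd (h b hb) (by rw [← (show a = b from Subtype.mk.inj hab), Set.eq_of_mem_singleton ha]; exact lt_irrefl m)
    · exact congrArg Sum.inr (Subtype.ext (Subtype.mk.inj hab))
  · rintro (⟨a, ha⟩ | ⟨a, ha⟩) (⟨b, hb⟩ | ⟨b, hb⟩)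
    · show a < b ↔ _
      constructor
      · exact fun hab => Sum.Lex.inl hab
      · intro hl; cases hl; assumption
    · have hbm := Set.eq_of_mem_singleton hb
      subst hbm
      exact iff_of_true (h a ha) (Sum.Lex.sep _ _)
    · have ham := Set.eq_of_mem_singleton ha
      subst ham
      refine iff_of_false (not_lt.mpr (h b hb).le) ?_
      intro hl; cases hl
    · have ham := Set.eq_of_mem_singleton ha
      have hbm := Set.eq_of_mem_singleton hb
      subst ham; subst hbm
      refine iff_of_false (lt_irrefl _) ?_
      intro hl
      cases hl with
      | inr h' => exact lt_irrefl _ h'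
  · rintro ⟨a, ha⟩
    rcases Set.mem_insert_iff.mp ha with rfl | haS
    · exact ⟨Sum.inr ⟨a, rfl⟩, Subtype.ext rfl⟩
    · exact ⟨Sum.inl ⟨a, haS⟩, Subtype.ext rfl⟩

noncomputable def seqx (χ : Ordinal.{0} → Ordinal.{0} → Ordinal.{0}) (x : Ordinal.{0}) (ξ : Ordinal.{0}) : Ordinal.{0} :=
  sInf {a | ∀ η, η < ξ → seqx χ x η < a ∧ χ (seqx χ x η) a = χ (seqx χ x η) x}
termination_by ξ
decreasing_by assumption

lemma seqx_def (χ : Ordinal.{0} → Ordinal.{0} → Ordinal.{0}) (x ξ : Ordinal.{0}) :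
    seqx χ x ξ =
      sInf {a | ∀ η, η < ξ → seqx χ x η < a ∧ χ (seqx χ x η) a = χ (seqx χ x η) x} := by
  conv_lhs => rw [seqx]

variable {χ : Ordinal.{0} → Ordinal.{0} → Ordinal.{0}} {x : Ordinal.{0}}

lemma seqx_le (ξ : Ordinal) (h : ∀ η < ξ, seqx χ x η < x) : seqx χ x ξ ≤ x := by
  rw [seqx_def χ x ξ]
  exact csInf_le' (fun η hη => ⟨h η hη, rfl⟩)

lemma seqx_mem (ξ : Ordinal) (h : ∀ η < ξ, seqx χ x η < x) :
    ∀ η < ξ, seqx χ x η < seqx χ x ξ ∧ χ (seqx χ x η) (seqx χ x ξ) = χ (seqx χ x η) x := by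
  have : seqx χ x ξ ∈ {a | ∀ η, η < ξ → seqx χ x η < a ∧ χ (seqx χ x η) a = χ (seqx χ x η) x} := by
    rw [seqx_def χ x ξ]
    exact csInf_mem ⟨x, fun η hη => ⟨h η hη, rfl⟩⟩
  exact this

/-- least `ξ` with `seqx χ x ξ = x`. -/
noncomputable def rho (χ : Ordinal.{0} → Ordinal.{0} → Ordinal.{0}) (x : Ordinal.{0}) : Ordinal.{0} :=
  sInf {ξ | seqx χ x ξ = x}

lemma rho_nonempty : {ξ | seqx χ x ξ = x}.Nonempty := by
  by_contra h
  rw [Set.not_nonempty_iff_eq_empty, Set.eq_empty_iff_forall_notMem] at h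
  have hlt : ∀ ξ, seqx χ x ξ < x := by
    intro ξ
    induction ξ using Ordinal.induction with
    | h ξ IH => exact lt_of_le_of_ne (seqx_le ξ fun η hη => IH η hη) (h ξ)
  have hsm : StrictMono (seqx χ x) := fun η ξ h => (seqx_mem ξ (fun η' _ => hlt η') η h).1
  exact absurd hsm.le_apply (not_le.mpr (hlt x))

lemma seqx_rho : seqx χ x (rho χ x) = x := csInf_mem rho_nonempty

lemma seqx_lt_self {ξ : Ordinal} (hξ : ξ < rho χ x) : seqx χ x ξ < x := by
  induction ξ using Ordinal.induction with
  | h ξ IH =>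
    refine lt_of_le_of_ne (seqx_le ξ fun η hη => IH η hη (hη.trans hξ)) ?_
    intro he
    have : rho χ x ≤ ξ := csInf_le' (s := {ξ : Ordinal | seqx χ x ξ = x}) he
    exact absurd this (not_le.mpr hξ)

lemma seqx_cond {ξ : Ordinal} (hξ : ξ ≤ rho χ x) :
    ∀ η < ξ, seqx χ x η < seqx χ x ξ ∧ χ (seqx χ x η) (seqx χ x ξ) = χ (seqx χ x η) x :=
  seqx_mem ξ fun η hη => seqx_lt_self (lt_of_lt_of_le hη hξ)

lemma seqx_le_self {ξ : Ordinal} (hξ : ξ ≤ rho χ x) : seqx χ x ξ ≤ x :=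
  seqx_le ξ fun η hη => seqx_lt_self (lt_of_lt_of_le hη hξ)

lemma seqx_strictMonoOn {η ξ : Ordinal} (hηξ : η < ξ) (hξ : ξ ≤ rho χ x) :
    seqx χ x η < seqx χ x ξ := (seqx_cond hξ η hηξ).1

theorem seqx_injective {χ : Ordinal → Ordinal → Ordinal} {x y : Ordinal}
    (hr : rho χ x = rho χ y)
    (ht : ∀ η < rho χ x, χ (seqx χ x η) x = χ (seqx χ y η) y) : x = y := by
  have key : ∀ ξ ≤ rho χ x, seqx χ x ξ = seqx χ y ξ := by
    intro ξ
    induction ξ using Ordinal.induction with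
    | h ξ IH =>
      intro hξ
      have hset : {a | ∀ η, η < ξ → seqx χ x η < a ∧ χ (seqx χ x η) a = χ (seqx χ x η) x}
          = {a | ∀ η, η < ξ → seqx χ y η < a ∧ χ (seqx χ y η) a = χ (seqx χ y η) y} := by
        ext a
        constructor <;> intro ha η hη <;>
          have e := IH η hη (le_of_lt (lt_of_lt_of_le hη hξ)) <;>
          have t := ht η (lt_of_lt_of_le hη hξ)
        · refine ⟨e ▸ (ha η hη).1, ?_⟩
          rw [← t, ← e]
          exact (ha η hη).2
        · refine ⟨e ▸ (ha η hη).1, ?_⟩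
          rw [t, e]
          exact (ha η hη).2
      rw [seqx_def χ x ξ, seqx_def χ y ξ, hset]
  calc x = seqx χ x (rho χ x) := seqx_rho.symm
    _ = seqx χ y (rho χ y) := by rw [key _ le_rfl, hr]
    _ = y := seqx_rho

lemma kappa_le_powerlt {κ : Cardinal.{0}} (hκ : Cardinal.aleph0 ≤ κ) :
    κ ≤ (2 : Cardinal) ^< κ := by
  by_contra hk
  push_neg at hk
  exact absurd (Cardinal.le_powerlt 2 hk) (not_le.mpr (Cardinal.cantor _))

lemma pow_le_powerlt {κ a b : Cardinal.{0}} (hκ : Cardinal.aleph0 ≤ κ)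
    (ha : a < κ) (hb : b < κ) : a ^ b ≤ (2 : Cardinal) ^< κ := by
  calc a ^ b ≤ ((2 : Cardinal) ^ a) ^ b :=
        Cardinal.power_le_power_right (Cardinal.cantor a).le
    _ = (2 : Cardinal) ^ (a * b) := Cardinal.power_mul.symm
    _ ≤ (2 : Cardinal) ^< κ := Cardinal.le_powerlt 2 (Cardinal.mul_lt_of_lt hκ ha hb)

lemma exists_long_seq {κ : Cardinal.{0}} (hκ : Cardinal.aleph0 ≤ κ)
    {γ : Ordinal.{0}} (hγ0 : 0 < γ) (hγκ : γ.card < κ)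
    {χ : Ordinal.{0} → Ordinal.{0} → Ordinal.{0}} (hχ : ∀ a b, χ a b < γ) :
    ∃ x < (Order.succ ((2 : Cardinal) ^< κ)).ord, κ.ord ≤ rho χ x := by
  by_contra hcon
  push_neg at hcon
  set c := (2 : Cardinal.{0}) ^< κ with hc_def
  have hκc : κ ≤ c := kappa_le_powerlt hκ
  have hc : Cardinal.aleph0 ≤ c := hκ.trans hκc
  set T := Σ ρ : Set.Iio κ.ord, (Set.Iio (ρ : Ordinal.{0}) → Set.Iio γ) with hT_def
  have key : #(Set.Iio (Order.succ c).ord) ≤ #T := by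
    refine Cardinal.mk_le_of_injective
      (f := fun x : Set.Iio (Order.succ c).ord =>
        (⟨⟨rho χ x.1, hcon x.1 x.2⟩, fun η => ⟨χ (seqx χ x.1 η.1) x.1, hχ _ _⟩⟩ : T)) ?_
    intro x y hf
    have h1 : rho χ x.1 = rho χ y.1 := congrArg (fun t : T => (t.1 : Ordinal)) hf
    have h2 : ∀ η < rho χ x.1, χ (seqx χ x.1 η) x.1 = χ (seqx χ y.1 η) y.1 := by
      intro η hη
      have h3 := congrArg
        (fun t : T => if hη' : η < (t.1 : Ordinal) then (t.2 ⟨η, hη'⟩ : Ordinal) else 0) hf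
      simp only [dif_pos hη, dif_pos (show η < rho χ y.1 from h1 ▸ hη)] at h3
      exact h3
    exact Subtype.ext (seqx_injective h1 h2)
  have hTle : #T ≤ Cardinal.lift.{1, 0} c := by
    calc #T = Cardinal.sum (fun ρ : Set.Iio κ.ord => #(Set.Iio (ρ : Ordinal) → Set.Iio γ)) :=
          Cardinal.mk_sigma _
      _ ≤ Cardinal.sum (fun _ : Set.Iio κ.ord => Cardinal.lift.{1, 0} c) := by
          refine Cardinal.sum_le_sum _ _ fun ρ => ?_
          rw [Cardinal.mk_arrow, Cardinal.mk_Iio_ordinal, Cardinal.mk_Iio_ordinal, Cardinal.lift_id,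
            Cardinal.lift_id, ← Cardinal.lift_power, Cardinal.lift_le]
          exact pow_le_powerlt hκ hγκ (Cardinal.lt_ord.mp ρ.2)
      _ = #(Set.Iio κ.ord) * Cardinal.lift.{1, 0} c := Cardinal.sum_const' _ _
      _ = Cardinal.lift.{1, 0} κ * Cardinal.lift.{1, 0} c := by
          rw [Cardinal.mk_Iio_ordinal, Cardinal.card_ord]
      _ = Cardinal.lift.{1, 0} (κ * c) := (Cardinal.lift_mul _ _).symm
      _ ≤ Cardinal.lift.{1, 0} (c * c) := by
          rw [Cardinal.lift_le]
          exact mul_le_mul_left hκc c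
      _ = Cardinal.lift.{1, 0} c := by rw [Cardinal.mul_eq_self hc]
  rw [Cardinal.mk_Iio_ordinal, Cardinal.card_ord] at key
  have : Order.succ c ≤ c := by
    rw [← Cardinal.lift_le (a := Order.succ c) (b := c)]
    exact key.trans hTle
  exact absurd this (not_le.mpr (Order.lt_succ c))

lemma exists_big_fiber {κ : Cardinal.{0}} (hκ : Cardinal.aleph0 ≤ κ)
    {γ : Ordinal.{0}} (hγcof : γ.card < κ.ord.cof)
    {χ : Ordinal.{0} → Ordinal.{0} → Ordinal.{0}} (hχ : ∀ a b, χ a b < γ)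
    (x : Ordinal.{0}) :
    ∃ i < γ, ¬ (#({η : Ordinal | η < κ.ord ∧ χ (seqx χ x η) x = i}) < Cardinal.lift.{1, 0} κ) := by
  by_contra hcon
  push_neg at hcon
  set g : Set.Iio κ.ord → Set.Iio γ := fun η => ⟨χ (seqx χ x η.1) x, hχ _ _⟩ with hg
  have hfib : ∀ i : Set.Iio γ,
      #({η : Set.Iio κ.ord // g η = i}) = #({η : Ordinal | η < κ.ord ∧ χ (seqx χ x η) x = i.1}) := by
    intro i
    refine Cardinal.mk_congr ⟨fun p => ⟨p.1.1, ⟨p.1.2, congrArg Subtype.val p.2⟩⟩,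
      fun q => ⟨⟨q.1, q.2.1⟩, Subtype.ext q.2.2⟩, fun _ => rfl, fun _ => rfl⟩
  have hsup : (⨆ i : Set.Iio γ, #({η : Set.Iio κ.ord // g η = i})) < Cardinal.lift.{1, 0} κ := by
    refine Ordinal.iSup_lt ?_ ?_
    · rw [Cardinal.mk_Iio_ordinal, ← Cardinal.lift_ord, ← Ordinal.lift_cof, Cardinal.lift_lt]
      exact hγcof
    · intro i
      rw [hfib i]
      exact hcon i.1 i.2
  have htot : Cardinal.lift.{1, 0} κ ≤ #(Set.Iio γ) * ⨆ i, #({η : Set.Iio κ.ord // g η = i}) := by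
    calc Cardinal.lift.{1, 0} κ = #(Set.Iio κ.ord) := by rw [Cardinal.mk_Iio_ordinal, Cardinal.card_ord]
      _ = #(Σ i : Set.Iio γ, {η : Set.Iio κ.ord // g η = i}) :=
          (Cardinal.mk_congr (Equiv.sigmaFiberEquiv g)).symm
      _ = Cardinal.sum (fun i : Set.Iio γ => #({η : Set.Iio κ.ord // g η = i})) :=
          Cardinal.mk_sigma _
      _ ≤ _ := Cardinal.sum_le_mk_mul_iSup _
  have hγκ : #(Set.Iio γ) < Cardinal.lift.{1, 0} κ := by
    rw [Cardinal.mk_Iio_ordinal, Cardinal.lift_lt]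
    exact hγcof.trans_le (Ordinal.cof_ord_le κ)
  have : Cardinal.lift.{1, 0} κ < Cardinal.lift.{1, 0} κ :=
    htot.trans_lt (Cardinal.mul_lt_of_lt (by rwa [Cardinal.aleph0_le_lift]) hγκ hsup)
  exact absurd this (lt_irrefl _)

/-- Balanced Erdős–Rado for pairs: for every infinite cardinal κ and nonzero
ordinal γ < cf(κ), (2^{<κ})⁺ → (κ + 1)²_γ. -/
theorem stmt_6 (κ : Cardinal.{0}) (hκ : Cardinal.aleph0 ≤ κ)
    (γ : Ordinal.{0}) (hγ0 : 0 < γ) (hγ : γ < (κ.ord.cof).ord)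
    (χ : Ordinal.{0} → Ordinal.{0} → Ordinal.{0}) (hχ : ∀ a b, χ a b < γ) :
    ∃ H : Set Ordinal.{0}, H ⊆ Set.Iio (Order.succ ((2 : Cardinal) ^< κ)).ord ∧
      otype H = Ordinal.lift.{1, 0} (κ.ord + 1) ∧
      ∃ i < γ, ∀ a ∈ H, ∀ b ∈ H, a < b → χ a b = i := by
  have hγκcof : γ.card < κ.ord.cof := Cardinal.lt_ord.mp hγ
  have hγκ : γ.card < κ := hγκcof.trans_le (Ordinal.cof_ord_le κ)
  obtain ⟨x, hx, hρ⟩ := exists_long_seq hκ hγ0 hγκ hχ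
  obtain ⟨i, hiγ, hbig⟩ := exists_big_fiber hκ hγκcof hχ x
  set S : Set Ordinal.{0} := {η | η < κ.ord ∧ χ (seqx χ x η) x = i} with hS
  have hSsub : S ⊆ Set.Iio κ.ord := fun η hη => hη.1
  have hScard : #S = Cardinal.lift.{1, 0} κ := by
    refine le_antisymm ?_ (not_lt.mp hbig)
    calc #S ≤ #(Set.Iio κ.ord) := Cardinal.mk_le_mk_of_subset hSsub
      _ = Cardinal.lift.{1, 0} κ := by rw [Cardinal.mk_Iio_ordinal, Cardinal.card_ord]
  have hotS : otype S = Ordinal.lift.{1, 0} κ.ord := by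
    refine le_antisymm ((otype_mono hSsub).trans_eq (otype_Iio _)) ?_
    rw [Cardinal.lift_ord, Cardinal.ord_le, otype_card, hScard]
  have hmono : ∀ a ∈ S, ∀ b ∈ S, a < b → seqx χ x a < seqx χ x b := fun a _ b hb hab =>
    seqx_strictMonoOn hab (le_trans hb.1.le hρ)
  have htop : ∀ s ∈ (seqx χ x) '' S, s < seqx χ x κ.ord := by
    rintro s ⟨η, hη, rfl⟩
    exact seqx_strictMonoOn hη.1 hρ
  refine ⟨insert (seqx χ x κ.ord) ((seqx χ x) '' S), ?_, ?_, i, hiγ, ?_⟩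
  · intro a ha
    rcases Set.mem_insert_iff.mp ha with rfl | ⟨η, hη, rfl⟩
    · exact lt_of_le_of_lt (seqx_le_self hρ) hx
    · exact lt_of_le_of_lt (seqx_le_self (le_trans hη.1.le hρ)) hx
  · rw [otype_insert_top htop, otype_image hmono, hotS, Ordinal.lift_add, Ordinal.lift_one]
  · intro a ha b hb hab
    rcases Set.mem_insert_iff.mp ha with rfl | ⟨η, hη, rfl⟩
    · exfalso
      rcases Set.mem_insert_iff.mp hb with rfl | hbi
      · exact lt_irrefl _ hab
      · exact lt_irrefl _ (hab.trans (htop b hbi))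
    · rcases Set.mem_insert_iff.mp hb with rfl | ⟨ξ, hξ, rfl⟩
      · exact ((seqx_cond hρ η hη.1).2).trans hη.2
      · have hηξ : η < ξ := by
          rcases lt_trichotomy η ξ with h' | h' | h'
          · exact h'
          · exact absurd hab (h' ▸ lt_irrefl _)
          · exact absurd (hmono ξ hξ η hη h') (not_lt.mpr hab.le)
        exact ((seqx_cond (le_trans hξ.1.le hρ) η hηξ).2).trans hη.2
end

section
/- ω₁ → (ω₁, ω)²: for every 2-coloring of pairs of countable ordinals, either there is an uncountable set homogeneous in color 0 or an infinite set homogeneous in color 1. -/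
open Cardinal Set

namespace Stmt10Aux

set_option linter.deprecated false

lemma uncountable_Iio : ¬ (Set.Iio (Cardinal.aleph 1).ord).Countable := by
  rw [countable_iff_lt_aleph_one, Ordinal.mk_Iio_ordinal, Cardinal.card_ord,
    lift_aleph, Ordinal.lift_one]
  exact lt_irrefl _

lemma countable_Iic {γ : Ordinal} (hγ : γ < (Cardinal.aleph 1).ord) :
    (Set.Iic γ).Countable := by
  have h1 : Order.succ γ < (Cardinal.aleph 1).ord :=
    (Cardinal.isSuccLimit_ord (aleph0_le_aleph 1)).succ_lt hγ
  rw [← Order.Iio_succ, countable_iff_lt_aleph_one, Ordinal.mk_Iio_ordinal]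
  calc Cardinal.lift (Order.succ γ).card < Cardinal.lift (aleph 1) := by
        rw [Cardinal.lift_lt]; exact Cardinal.lt_ord.1 h1
    _ = aleph 1 := by rw [lift_aleph, Ordinal.lift_one]

lemma exists_gt {S : Set Ordinal} (hS : ¬ S.Countable) {γ : Ordinal}
    (hγ : γ < (Cardinal.aleph 1).ord) : ∃ a ∈ S, γ < a := by
  by_contra h
  push_neg at h
  exact hS ((countable_Iic hγ).mono h)

lemma sSup_lt {A : Set Ordinal} (hc : A.Countable) (hb : A ⊆ Set.Iio (Cardinal.aleph 1).ord) :
    sSup A < (Cardinal.aleph 1).ord := by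
  rcases A.eq_empty_or_nonempty with rfl | hne
  · rw [csSup_empty]
    exact Cardinal.lt_ord.2 (by simpa using aleph_pos 1)
  · obtain ⟨f, rfl⟩ := hc.exists_eq_range hne
    have : sSup (Set.range f) = ⨆ n, f n := rfl
    rw [this]
    refine Cardinal.iSup_lt_ord_lift_of_isRegular isRegular_aleph_one ?_
      (fun n => hb (Set.mem_range_self n))
    rw [Cardinal.mk_nat, Cardinal.lift_aleph0]
    exact aleph0_lt_aleph_one

lemma le_sSup_of_bdd {A : Set Ordinal} (hb : A ⊆ Set.Iio (Cardinal.aleph 1).ord) {a : Ordinal}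
    (ha : a ∈ A) : a ≤ sSup A :=
  le_csSup ⟨(Cardinal.aleph 1).ord, fun _ h => (hb h).le⟩ ha

end Stmt10Aux

open Stmt10Aux

set_option linter.deprecated false in
set_option maxHeartbeats 1000000 in
/-- ω₁ → (ω₁, ω)²: every 2-coloring of pairs of countable ordinals admits either an
uncountable set homogeneous in color 0 or an infinite set homogeneous in color 1. -/
theorem stmt_10 (χ : Ordinal → Ordinal → Fin 2) :
    (∃ H : Set Ordinal, H ⊆ Set.Iio (Cardinal.aleph 1).ord ∧ ¬ H.Countable ∧
      ∀ a ∈ H, ∀ b ∈ H, a < b → χ a b = 0) ∨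
    (∃ H : Set Ordinal, H ⊆ Set.Iio (Cardinal.aleph 1).ord ∧ H.Infinite ∧
      ∀ a ∈ H, ∀ b ∈ H, a < b → χ a b = 1) := by
  classical
  set ω1 := (Cardinal.aleph 1).ord with hω1
  set N : Set Ordinal → Ordinal → Set Ordinal :=
    fun S a => {b | b ∈ S ∧ a < b ∧ χ a b = 1} with hN
  by_cases P : ∀ S : Set Ordinal, S ⊆ Set.Iio ω1 → ¬ S.Countable →
      ∃ a ∈ S, ¬ (N S a).Countable
  · -- build an infinite 1-homogeneous set
    right
    let Good := {S : Set Ordinal // S ⊆ Set.Iio ω1 ∧ ¬ S.Countable}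
    let pickA : Good → Ordinal := fun S => (P S.1 S.2.1 S.2.2).choose
    have pickA_mem : ∀ S : Good, pickA S ∈ S.1 := fun S => (P S.1 S.2.1 S.2.2).choose_spec.1
    have pickA_unc : ∀ S : Good, ¬ (N S.1 (pickA S)).Countable :=
      fun S => (P S.1 S.2.1 S.2.2).choose_spec.2
    let step : Good → Good := fun S =>
      ⟨N S.1 (pickA S), fun b hb => S.2.1 hb.1, pickA_unc S⟩
    let T : ℕ → Good := fun n => step^[n] ⟨Set.Iio ω1, subset_rfl, uncountable_Iio⟩
    have hTsucc : ∀ n, (T (n+1)).1 = N (T n).1 (pickA (T n)) := by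
      intro n
      show (step^[n+1] _).1 = _
      rw [Function.iterate_succ_apply']
    set a : ℕ → Ordinal := fun n => pickA (T n) with ha
    have hsub : ∀ n, (T (n+1)).1 ⊆ (T n).1 := by
      intro n b hb
      rw [hTsucc n] at hb
      exact hb.1
    have hchain : ∀ m n, m ≤ n → (T n).1 ⊆ (T m).1 := by
      intro m n h
      induction n with
      | zero => cases Nat.le_zero.1 h; exact subset_rfl
      | succ k ih =>
        rcases Nat.le_succ_iff.1 h with h' | h'
        · exact (hsub k).trans (ih h')
        · subst h'; exact subset_rfl
    have key : ∀ m n, m < n → a m < a n ∧ χ (a m) (a n) = 1 := by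
      intro m n hmn
      have h1 : a n ∈ (T (m+1)).1 := hchain (m+1) n hmn (pickA_mem (T n))
      rw [hTsucc m] at h1
      exact ⟨h1.2.1, h1.2.2⟩
    have hmono : StrictMono a := strictMono_nat_of_lt_succ fun n => (key n (n+1) (by omega)).1
    refine ⟨Set.range a, ?_, ?_, ?_⟩
    · rintro x ⟨n, rfl⟩
      exact (T n).2.1 (pickA_mem (T n))
    · exact Set.infinite_range_of_injective hmono.injective
    · rintro x ⟨m, rfl⟩ y ⟨n, rfl⟩ hxy
      exact (key m n (hmono.lt_iff_lt.1 hxy)).2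
  · -- build an uncountable 0-homogeneous set
    left
    push_neg at P
    obtain ⟨S, hS1, hS2, hS3⟩ := P
    set h : Ordinal → Ordinal := fun a => sSup (N S a) with hh
    have hNsub : ∀ a, N S a ⊆ Set.Iio ω1 := fun a b hb => hS1 hb.1
    have hlt : ∀ a ∈ S, h a < ω1 := fun a ha => sSup_lt (hS3 a ha) (hNsub a)
    have hle : ∀ a, ∀ b ∈ N S a, b ≤ h a := fun a b hb => le_sSup_of_bdd (hNsub a) hb
    have exists_above : ∀ γ < ω1, ∃ x ∈ S, γ < x ∧ ∀ b ∈ S, b ≤ γ → h b < x := by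
      intro γ hγ
      set M : Ordinal := sSup (h '' (S ∩ Set.Iic γ)) with hM
      have hMc : (h '' (S ∩ Set.Iic γ)).Countable :=
        (((countable_Iic hγ).mono Set.inter_subset_right)).image h
      have hMb : h '' (S ∩ Set.Iic γ) ⊆ Set.Iio ω1 := by
        rintro _ ⟨b, hb, rfl⟩; exact hlt b hb.1
      have hMlt : M < ω1 := sSup_lt hMc hMb
      obtain ⟨x, hx, hgx⟩ := exists_gt hS2 (max_lt hγ hMlt)
      refine ⟨x, hx, (le_max_left _ _).trans_lt hgx, fun b hb hbγ => ?_⟩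
      have : h b ≤ M := le_sSup_of_bdd hMb ⟨b, ⟨hb, hbγ⟩, rfl⟩
      exact this.trans_lt ((le_max_right _ _).trans_lt hgx)
    set g : Ordinal → Ordinal := fun γ =>
      if hγ : γ < ω1 then (exists_above γ hγ).choose else 0 with hgdef
    have hg : ∀ γ (hγ : γ < ω1),
        g γ ∈ S ∧ γ < g γ ∧ ∀ b ∈ S, b ≤ γ → h b < g γ := by
      intro γ hγ
      have hs := (exists_above γ hγ).choose_spec
      rw [hgdef]
      simp only [dif_pos hγ]
      exact ⟨hs.1, hs.2.1, hs.2.2⟩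
    set x : Ordinal → Ordinal := fun α =>
      Ordinal.limitRecOn α (g 0) (fun _ ih => g ih)
        (fun o _ ih => g (sSup (Set.range fun β : Set.Iio o => ih β.1 β.2))) with hxdef
    have hx0 : x 0 = g 0 := Ordinal.limitRecOn_zero _ _ _
    have hxs : ∀ o, x (Order.succ o) = g (x o) := fun o => Ordinal.limitRecOn_succ _ _ _ _
    have hxl : ∀ o, Order.IsSuccLimit o → x o = g (sSup (Set.range fun β : Set.Iio o => x β.1)) :=
      fun o ho => Ordinal.limitRecOn_limit _ _ _ _ ho
    have zero_lt : (0 : Ordinal) < ω1 :=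
      Cardinal.lt_ord.2 (by simpa using aleph_pos 1)
    have claim : ∀ α, α < ω1 → x α ∈ S ∧ ∀ β < α, x β < x α ∧ h (x β) < x α := by
      intro α
      induction α using Ordinal.induction with
      | h α IH =>
        intro hα
        rcases Ordinal.zero_or_succ_or_isSuccLimit α with rfl | ⟨o, rfl⟩ | ho
        · rw [hx0]
          exact ⟨(hg 0 zero_lt).1, fun β hβ => absurd hβ ((zero_le (a := β)).not_gt)⟩
        · have ho : o < Order.succ o := Order.lt_succ o
          have hoω : o < ω1 := ho.trans hα
          have IHo := IH o ho hoω
          have hxoω : x o < ω1 := hS1 IHo.1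
          rw [hxs o]
          obtain ⟨hmem, hgt, hbd⟩ := hg (x o) hxoω
          refine ⟨hmem, fun β hβ => ?_⟩
          rcases lt_or_eq_of_le (Order.lt_succ_iff.1 hβ) with hβo | rfl
          · obtain ⟨h1, _⟩ := IHo.2 β hβo
            exact ⟨h1.trans hgt, hbd _ (IH β (hβo.trans ho) (hβo.trans hoω)).1 h1.le⟩
          · exact ⟨hgt, hbd _ IHo.1 le_rfl⟩
        · rw [hxl α ho]
          set M : Ordinal := sSup (Set.range fun β : Set.Iio α => x β.1) with hMdef
          have hrange : (Set.range fun β : Set.Iio α => x β.1) ⊆ Set.Iio ω1 := by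
            rintro _ ⟨β, rfl⟩
            exact hS1 (IH β.1 β.2 (β.2.trans hα)).1
          have hMle : ∀ β (hβ : β < α), x β ≤ M := fun β hβ =>
            le_sSup_of_bdd hrange ⟨⟨β, hβ⟩, rfl⟩
          have hMlt : M < ω1 := by
            refine sSup_lt ?_ hrange
            rw [← Set.image_eq_range]
            exact ((countable_Iic hα).mono Set.Iio_subset_Iic_self).image x
          obtain ⟨hmem, hgt, hbd⟩ := hg M hMlt
          refine ⟨hmem, fun β hβ => ?_⟩
          have h1 : x β ≤ M := hMle β hβ
          exact ⟨h1.trans_lt hgt, hbd _ (IH β hβ (hβ.trans hα)).1 h1⟩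
    have hinj : Set.InjOn x (Set.Iio ω1) := by
      intro β hβ α hα hxe
      by_contra hne
      rcases lt_or_gt_of_ne hne with hlt | hlt
      · exact absurd hxe (((claim α hα).2 β hlt).1.ne)
      · exact absurd hxe (((claim β hβ).2 α hlt).1.ne')
    refine ⟨x '' Set.Iio ω1, ?_, ?_, ?_⟩
    · rintro _ ⟨α, hα, rfl⟩
      exact hS1 (claim α hα).1
    · intro hc
      refine uncountable_Iio ((countable_iff_lt_aleph_one _).2 ?_)
      rw [← Cardinal.mk_image_eq_of_injOn x _ hinj]
      exact (countable_iff_lt_aleph_one _).1 hc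
    · rintro _ ⟨β, hβ, rfl⟩ _ ⟨α, hα, rfl⟩ hlt
      have hβα : β < α := by
        by_contra hge
        push_neg at hge
        rcases lt_or_eq_of_le hge with hlt' | rfl
        · exact absurd (((claim β hβ).2 α hlt').1) (asymm hlt)
        · exact lt_irrefl _ hlt
      obtain ⟨_, hha⟩ := (claim α hα).2 β hβα
      by_contra hne
      have hone : χ (x β) (x α) = 1 := by omega
      have hmem : x α ∈ N S (x β) := ⟨(claim α hα).1, hlt, hone⟩
      exact absurd (hle (x β) _ hmem) (not_le.2 hha)
end

section
/- (Finite Ramsey for triples) For all finite ordinals m and n there exists a finite ordinal r such that r → (m, n)³: every 2-coloring of the 3-element subsets of r admits either an m-element subset homogeneous in color 0 or an n-element subset homogeneous in color 1. -/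
/-- Finite Ramsey for pairs, with fuel `k ≥ m + n`. -/
lemma ramsey2aux : ∀ k m n : ℕ, m + n ≤ k →
    ∃ r : ℕ, ∀ S : Finset ℕ, r ≤ S.card → ∀ χ : Finset ℕ → Fin 2,
      ∃ H, H ⊆ S ∧
        ((H.card = m ∧ ∀ t ⊆ H, t.card = 2 → χ t = 0) ∨
         (H.card = n ∧ ∀ t ⊆ H, t.card = 2 → χ t = 1)) := by
  intro k
  induction k with
  | zero =>
    intro m n hmn
    have hm : m = 0 := by omega
    subst hm
    refine ⟨0, fun S _ χ => ⟨∅, Finset.empty_subset _, Or.inl ⟨Finset.card_empty, ?_⟩⟩⟩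
    intro t ht hc
    simp [Finset.subset_empty.mp ht] at hc
  | succ k ih =>
    intro m n hmn
    match m, n with
    | 0, n =>
      exact ⟨0, fun S _ χ => ⟨∅, Finset.empty_subset _, Or.inl ⟨rfl, fun t ht hc => by
        simp [Finset.subset_empty.mp ht] at hc⟩⟩⟩
    | m+1, 0 =>
      exact ⟨0, fun S _ χ => ⟨∅, Finset.empty_subset _, Or.inr ⟨rfl, fun t ht hc => by
        simp [Finset.subset_empty.mp ht] at hc⟩⟩⟩
    | m+1, n+1 =>
      obtain ⟨r₁, h₁⟩ := ih m (n+1) (by omega)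
      obtain ⟨r₂, h₂⟩ := ih (m+1) n (by omega)
      refine ⟨r₁ + r₂ + 1, fun S hS χ => ?_⟩
      have hne : S.Nonempty := Finset.card_pos.mp (by omega)
      obtain ⟨v, hv⟩ := hne
      set N₀ := (S.erase v).filter (fun u => χ (insert v {u}) = 0) with hN₀
      set N₁ := (S.erase v).filter (fun u => ¬ (χ (insert v {u}) = 0)) with hN₁
      have hsum : N₀.card + N₁.card = (S.erase v).card :=
        Finset.card_filter_add_card_filter_not _
      have hcard : (S.erase v).card = S.card - 1 := Finset.card_erase_of_mem hv
      have hor : r₁ ≤ N₀.card ∨ r₂ ≤ N₁.card := by omega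
      -- helper: extend a homogeneous set by v
      have key : ∀ (N H : Finset ℕ) (c : Fin 2), N ⊆ S.erase v → H ⊆ N →
          (∀ u ∈ N, χ (insert v {u}) = c) →
          (∀ t ⊆ H, t.card = 2 → χ t = c) →
          (insert v H ⊆ S ∧ (insert v H).card = H.card + 1 ∧
            ∀ t ⊆ insert v H, t.card = 2 → χ t = c) := by
        intro N H c hNS hHN hpair hhom
        have hvH : v ∉ H := fun h => (Finset.notMem_erase v S) (hNS (hHN h))
        refine ⟨?_, Finset.card_insert_of_notMem hvH, ?_⟩
        · intro x hx
          rcases Finset.mem_insert.mp hx with rfl | hx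
          · exact hv
          · exact Finset.mem_of_mem_erase (hNS (hHN hx))
        · intro t ht hc
          by_cases hvt : v ∈ t
          · have he : t.erase v ⊆ H := by
              intro x hx
              have hx' : x ∈ insert v H := ht (Finset.mem_of_mem_erase hx)
              rcases Finset.mem_insert.mp hx' with rfl | h
              · exact absurd rfl (Finset.ne_of_mem_erase hx)
              · exact h
            have hce : (t.erase v).card = 1 := by
              rw [Finset.card_erase_of_mem hvt, hc]
            obtain ⟨u, hu⟩ := Finset.card_eq_one.mp hce
            have huH : u ∈ H := he (hu ▸ Finset.mem_singleton_self u)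
            have : t = insert v {u} := by
              rw [← hu, Finset.insert_erase hvt]
            rw [this]
            exact hpair u (hHN huH)
          · have htH : t ⊆ H := fun x hx => by
              rcases Finset.mem_insert.mp (ht hx) with rfl | h
              · exact absurd hx hvt
              · exact h
            exact hhom t htH hc
      rcases hor with h | h
      · obtain ⟨H, hHN, hcase⟩ := h₁ N₀ h χ
        have hNS : N₀ ⊆ S.erase v := Finset.filter_subset _ _
        rcases hcase with ⟨hc, hhom⟩ | ⟨hc, hhom⟩
        · have hpair : ∀ u ∈ N₀, χ (insert v {u}) = 0 := fun u hu =>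
            (Finset.mem_filter.mp hu).2
          obtain ⟨hsub, hcard', hhom'⟩ := key N₀ H 0 hNS hHN hpair hhom
          exact ⟨insert v H, hsub, Or.inl ⟨by omega, hhom'⟩⟩
        · exact ⟨H, fun x hx => Finset.mem_of_mem_erase (hNS (hHN hx)),
            Or.inr ⟨hc, hhom⟩⟩
      · obtain ⟨H, hHN, hcase⟩ := h₂ N₁ h χ
        have hNS : N₁ ⊆ S.erase v := Finset.filter_subset _ _
        rcases hcase with ⟨hc, hhom⟩ | ⟨hc, hhom⟩
        · exact ⟨H, fun x hx => Finset.mem_of_mem_erase (hNS (hHN hx)),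
            Or.inl ⟨hc, hhom⟩⟩
        · have hpair : ∀ u ∈ N₁, χ (insert v {u}) = 1 := fun u hu => by
            have := (Finset.mem_filter.mp hu).2
            omega
          obtain ⟨hsub, hcard', hhom'⟩ := key N₁ H 1 hNS hHN hpair hhom
          exact ⟨insert v H, hsub, Or.inr ⟨by omega, hhom'⟩⟩

lemma ramsey2 (m n : ℕ) :
    ∃ r : ℕ, ∀ S : Finset ℕ, r ≤ S.card → ∀ χ : Finset ℕ → Fin 2,
      ∃ H, H ⊆ S ∧
        ((H.card = m ∧ ∀ t ⊆ H, t.card = 2 → χ t = 0) ∨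
         (H.card = n ∧ ∀ t ⊆ H, t.card = 2 → χ t = 1)) :=
  ramsey2aux (m + n) m n le_rfl

/-- Finite Ramsey for triples, with fuel. -/
lemma ramsey3aux : ∀ k m n : ℕ, m + n ≤ k →
    ∃ r : ℕ, ∀ S : Finset ℕ, r ≤ S.card → ∀ χ : Finset ℕ → Fin 2,
      ∃ H, H ⊆ S ∧
        ((H.card = m ∧ ∀ t ⊆ H, t.card = 3 → χ t = 0) ∨
         (H.card = n ∧ ∀ t ⊆ H, t.card = 3 → χ t = 1)) := by
  intro k
  induction k with
  | zero =>
    intro m n hmn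
    have hm : m = 0 := by omega
    subst hm
    refine ⟨0, fun S _ χ => ⟨∅, Finset.empty_subset _, Or.inl ⟨Finset.card_empty, ?_⟩⟩⟩
    intro t ht hc
    simp [Finset.subset_empty.mp ht] at hc
  | succ k ih =>
    intro m n hmn
    match m, n with
    | 0, n =>
      exact ⟨0, fun S _ χ => ⟨∅, Finset.empty_subset _, Or.inl ⟨rfl, fun t ht hc => by
        simp [Finset.subset_empty.mp ht] at hc⟩⟩⟩
    | m+1, 0 =>
      exact ⟨0, fun S _ χ => ⟨∅, Finset.empty_subset _, Or.inr ⟨rfl, fun t ht hc => by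
        simp [Finset.subset_empty.mp ht] at hc⟩⟩⟩
    | m+1, n+1 =>
      obtain ⟨r₁, h₁⟩ := ih m (n+1) (by omega)
      obtain ⟨r₂, h₂⟩ := ih (m+1) n (by omega)
      obtain ⟨p, hp⟩ := ramsey2 r₁ r₂
      refine ⟨p + 1, fun S hS χ => ?_⟩
      have hne : S.Nonempty := Finset.card_pos.mp (by omega)
      obtain ⟨v, hv⟩ := hne
      have hcard : p ≤ (S.erase v).card := by
        rw [Finset.card_erase_of_mem hv]; omega
      obtain ⟨A, hAS, hAcase⟩ := hp (S.erase v) hcard (fun e => χ (insert v e))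
      -- helper: extend a triple-homogeneous set by v
      have key : ∀ (H : Finset ℕ) (c : Fin 2), H ⊆ A →
          (∀ e ⊆ A, e.card = 2 → χ (insert v e) = c) →
          (∀ t ⊆ H, t.card = 3 → χ t = c) →
          (insert v H ⊆ S ∧ (insert v H).card = H.card + 1 ∧
            ∀ t ⊆ insert v H, t.card = 3 → χ t = c) := by
        intro H c hHA hpair hhom
        have hvH : v ∉ H := fun h => (Finset.notMem_erase v S) (hAS (hHA h))
        refine ⟨?_, Finset.card_insert_of_notMem hvH, ?_⟩
        · intro x hx
          rcases Finset.mem_insert.mp hx with rfl | hx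
          · exact hv
          · exact Finset.mem_of_mem_erase (hAS (hHA hx))
        · intro t ht hc
          by_cases hvt : v ∈ t
          · have he : t.erase v ⊆ A := by
              intro x hx
              have hx' : x ∈ insert v H := ht (Finset.mem_of_mem_erase hx)
              rcases Finset.mem_insert.mp hx' with rfl | h
              · exact absurd rfl (Finset.ne_of_mem_erase hx)
              · exact hHA h
            have hce : (t.erase v).card = 2 := by
              rw [Finset.card_erase_of_mem hvt, hc]
            have : t = insert v (t.erase v) := (Finset.insert_erase hvt).symm
            rw [this]
            exact hpair _ he hce
          · have htH : t ⊆ H := fun x hx => by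
              rcases Finset.mem_insert.mp (ht hx) with rfl | h
              · exact absurd hx hvt
              · exact h
            exact hhom t htH hc
      rcases hAcase with ⟨hAc, hApair⟩ | ⟨hAc, hApair⟩
      · obtain ⟨H, hHA, hcase⟩ := h₁ A (le_of_eq hAc.symm) χ
        rcases hcase with ⟨hc, hhom⟩ | ⟨hc, hhom⟩
        · obtain ⟨hsub, hcard', hhom'⟩ := key H 0 hHA hApair hhom
          exact ⟨insert v H, hsub, Or.inl ⟨by omega, hhom'⟩⟩
        · exact ⟨H, fun x hx => Finset.mem_of_mem_erase (hAS (hHA hx)),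
            Or.inr ⟨hc, hhom⟩⟩
      · obtain ⟨H, hHA, hcase⟩ := h₂ A (le_of_eq hAc.symm) χ
        rcases hcase with ⟨hc, hhom⟩ | ⟨hc, hhom⟩
        · exact ⟨H, fun x hx => Finset.mem_of_mem_erase (hAS (hHA hx)),
            Or.inl ⟨hc, hhom⟩⟩
        · have hApair' : ∀ e ⊆ A, e.card = 2 → χ (insert v e) = 1 := fun e he hc => by
            have := hApair e he hc
            omega
          obtain ⟨hsub, hcard', hhom'⟩ := key H 1 hHA hApair' hhom
          exact ⟨insert v H, hsub, Or.inr ⟨by omega, hhom'⟩⟩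

/-- Finite Ramsey for triples: for all finite m, n there is a finite r with
r → (m, n)³. -/
theorem stmt_11 (m n : ℕ) :
    ∃ r : ℕ, ∀ χ : Finset ℕ → Fin 2,
      ∃ H : Finset ℕ, H ⊆ Finset.range r ∧
        ((H.card = m ∧ ∀ t ⊆ H, t.card = 3 → χ t = 0) ∨
         (H.card = n ∧ ∀ t ⊆ H, t.card = 3 → χ t = 1)) := by
  obtain ⟨r, hr⟩ := ramsey3aux (m + n) m n le_rfl
  exact ⟨r, fun χ => hr (Finset.range r) (by simp) χ⟩
end
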